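/- arXiv:2211.14666 — 3 statements merged into one kernel-verified Lean document; each statement's English description precedes it below -/
import Mathlib

section
/- Let X ⊆ ℝ^d be nonempty, let f : ℝ^d → ℝ^m be continuous, and let k, m ≥ 1. Let P be a Borel probability measure on ℝ^{k×m} with topological support 𝒲, and for each W ∈ 𝒲 let μ_W be a Borel probability measure on ℝ^d with topological support equal to X. Let η ↦ ν_η (η ∈ ℝ^k) be a KL-identifiable family of probability measures on a measurable space, with all KL integrands below assumed measurable and integrable. Assume: (A4, sufficient representation variability) there exist x^(1),…,x^(m) ∈ X such that the matrix [f(x^(1)) ⋯ f(x^(m))] ∈ ℝ^{m×m} is invertible; (A5, sufficient task variability) there exist W^(1),…,W^(m) ∈ 𝒲 and indices i_1,…,i_m ∈ {1,…,k} such that the rows W^(1)_{i_1,:},…,W^(m)_{i_m,:} are linearly independent; (A6, intra-support sufficient task variability) for every S ⊆ {1,…,m} with P[colsupp(W) = S] > 0 and every nonzero a ∈ ℝ^m with supp(a) ⊆ S, P[{W : W a = 0} ∩ {colsupp(W) = S}] = 0; (A7, sufficient support variability) for every j ∈ {1,…,m}, the union of all sets S with P[colsupp(W) = S] > 0 and j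 ∉ S equals {1,…,m} \ {j}. For a continuous g : ℝ^d → ℝ^m define the inner objective R_g(W̃, W) := ∫ klDiv(ν_{W f(x)}, ν_{W̃ g(x)}) dμ_W(x); call a pair (g, V) with V : 𝒲 → ℝ^{k×m} feasible if for every W ∈ 𝒲, V(W) minimizes R_g(·, W) over {W̃ ∈ ℝ^{k×m} : ‖W̃‖_{2,0} ≤ ‖W‖_{2,0}}, and define its outer value J(g, V) := ∫ R_g(V(W), W) dP(W). If (f̂, Ŵ) is a feasible pair with f̂ continuous and J(f̂, Ŵ) ≤ J(g, V) for every feasible pair (g, V), then f̂ is disentangled with respect to f: there exist a permutation matrix Π ∈ ℝ^{m×m} and an invertible diagonal matrix D ∈ ℝ^{m×m} such that f̂(x) = D Π f(x) for all x ∈ X. -/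
/-!
The identity pair `(f, id)` is feasible with objective zero, so the optimal pair has objective
zero, and KL-identifiability together with `supp μ_W = X` gives `W f = Ŵ(W) f̂` on `X` for almost
every task. Evaluating at the points of (A4) and using that (A5) spans all directions produces an
invertible `M` with `Ŵ(W) = W M` almost surely and `M f̂ = f` on `X`.

The sparsity constraint `|colSupp (W M)| ≤ |colSupp W|` and (A6) make every support `S` of positive
probability tight for the bipartite graph of nonzero entries of `M`: the rows in `S` meet at most
`|S|` columns. Independent rows satisfy Hall's condition, so tight sets are closed under unions,
and by (A7) every `{p}ᶜ` is tight. Hence each row owns a column, `M` is a permuted diagonal matrix,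
and `f̂ = M⁻¹ f` is a permuted rescaling of `f`.
-/

open MeasureTheory
open scoped ENNReal BigOperators

noncomputable section

/-- Matrices over `ℝ` carry the Borel σ-algebra of their (product) topology. -/
instance matrixMeasurableSpace {k m : ℕ} :
    MeasurableSpace (Matrix (Fin k) (Fin m) ℝ) := borel _

instance matrixBorelSpace {k m : ℕ} : BorelSpace (Matrix (Fin k) (Fin m) ℝ) := ⟨rfl⟩

/-- The topological support of a measure: the points all of whose open neighbourhoods
have positive measure. -/
def msupport {α : Type*} [TopologicalSpace α] [MeasurableSpace α]
    (P : Measure α) : Set α :=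
  {x | ∀ U : Set α, IsOpen U → x ∈ U → 0 < P U}

/-- The column support of a matrix: indices of its nonzero columns. -/
def colSupp {k m : ℕ} (W : Matrix (Fin k) (Fin m) ℝ) : Set (Fin m) :=
  {j | ∃ i, W i j ≠ 0}

/-- The column sparsity `‖A‖_{2,0}`: the number of nonzero columns. -/
def colSparsity {k m : ℕ} (W : Matrix (Fin k) (Fin m) ℝ) : ℕ :=
  (colSupp W).ncard

/-- A matrix is a permutation matrix if it is obtained from a permutation `σ`
by putting a `1` in entry `(i, σ i)` and `0` elsewhere. -/
def IsPermMatrix {m : ℕ} (P : Matrix (Fin m) (Fin m) ℝ) : Prop :=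
  ∃ σ : Equiv.Perm (Fin m), P = Matrix.of fun i j => if σ i = j then (1 : ℝ) else 0

variable {d k m : ℕ} {Y : Type*} [MeasurableSpace Y]

/-- The inner population risk
`R_g(W̃, W) = ∫ klDiv (ν (W f x)) (ν (W̃ g x)) dμ_W(x)`. -/
def innerRisk (klDiv : Measure Y → Measure Y → ℝ≥0∞)
    (ν : (Fin k → ℝ) → Measure Y)
    (μ : Matrix (Fin k) (Fin m) ℝ → Measure (Fin d → ℝ))
    (f g : (Fin d → ℝ) → Fin m → ℝ)
    (Wt W : Matrix (Fin k) (Fin m) ℝ) : ℝ≥0∞ :=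
  ∫⁻ x, klDiv (ν (W.mulVec (f x))) (ν (Wt.mulVec (g x))) ∂(μ W)

/-- A pair `(g, V)` is feasible for the bi-level problem with the per-task sparsity
constraint when `g` is continuous and, for every task `W` in the support of `P`,
`V W` minimizes `R_g(·, W)` over `{W̃ : ‖W̃‖_{2,0} ≤ ‖W‖_{2,0}}` (and satisfies the
constraint itself). -/
def FeasibleSparse (klDiv : Measure Y → Measure Y → ℝ≥0∞)
    (ν : (Fin k → ℝ) → Measure Y)
    (μ : Matrix (Fin k) (Fin m) ℝ → Measure (Fin d → ℝ))
    (f : (Fin d → ℝ) → Fin m → ℝ)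
    (P : Measure (Matrix (Fin k) (Fin m) ℝ))
    (g : (Fin d → ℝ) → Fin m → ℝ)
    (V : Matrix (Fin k) (Fin m) ℝ → Matrix (Fin k) (Fin m) ℝ) : Prop :=
  Continuous g ∧ ∀ W ∈ msupport P,
    colSparsity (V W) ≤ colSparsity W ∧
    ∀ Wt : Matrix (Fin k) (Fin m) ℝ, colSparsity Wt ≤ colSparsity W →
      innerRisk klDiv ν μ f g (V W) W ≤ innerRisk klDiv ν μ f g Wt W

/-- The outer objective `J(g, V) = ∫ R_g(V W, W) dP(W)`. -/
def outerObj (klDiv : Measure Y → Measure Y → ℝ≥0∞)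
    (ν : (Fin k → ℝ) → Measure Y)
    (μ : Matrix (Fin k) (Fin m) ℝ → Measure (Fin d → ℝ))
    (f : (Fin d → ℝ) → Fin m → ℝ)
    (P : Measure (Matrix (Fin k) (Fin m) ℝ))
    (g : (Fin d → ℝ) → Fin m → ℝ)
    (V : Matrix (Fin k) (Fin m) ℝ → Matrix (Fin k) (Fin m) ℝ) : ℝ≥0∞ :=
  ∫⁻ W, innerRisk klDiv ν μ f g (V W) W ∂P

open Set
open scoped Matrix

instance Matrix.secondCountableTopology {m n α : Type*} [Countable m] [Countable n]
    [TopologicalSpace α] [SecondCountableTopology α] : SecondCountableTopology (Matrix m n α) :=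
  inferInstanceAs (SecondCountableTopology (m → n → α))

section Support

variable {α : Type*} [TopologicalSpace α] [MeasurableSpace α]

theorem msupport_eq_support (μ : Measure α) : msupport μ = μ.support := by
  simp only [Measure.support_eq_forall_isOpen, msupport]
  grind

theorem ae_mem_msupport [HereditarilyLindelofSpace α] (μ : Measure α) :
    ∀ᵐ x ∂μ, x ∈ msupport μ :=
  msupport_eq_support μ ▸ Measure.support_mem_ae

theorem msupport_subset_of_ae_mem {μ : Measure α} {C : Set α} (hC : IsClosed C)
    (h : ∀ᵐ x ∂μ, x ∈ C) : msupport μ ⊆ C :=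
  msupport_eq_support μ ▸ Measure.support_subset_of_isClosed hC h

theorem eqOn_msupport_of_ae_eq {β : Type*} [TopologicalSpace β] [T2Space β] {μ : Measure α}
    {g h : α → β} (hg : Continuous g) (hh : Continuous h) (hgh : g =ᵐ[μ] h) :
    EqOn g h (msupport μ) := fun x hx => by
  by_contra hne
  exact (hx _ (isOpen_ne_fun hg hh) hne).ne' (ae_iff.mp hgh)

end Support

namespace Matrix

variable {ι κ K : Type*} [Field K]

/-- The neighbourhood of the rows `T` in the bipartite graph of nonzero entries of `M`. -/
def neighborCols (M : Matrix ι κ K) (T : Set ι) : Set κ := ⋃ i ∈ T, {j | M i j ≠ 0}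

theorem neighborCols_union (M : Matrix ι κ K) (S₁ S₂ : Set ι) :
    M.neighborCols (S₁ ∪ S₂) = M.neighborCols S₁ ∪ M.neighborCols S₂ :=
  biUnion_union S₁ S₂ _

theorem neighborCols_mono (M : Matrix ι κ K) {S₁ S₂ : Set ι} (h : S₁ ⊆ S₂) :
    M.neighborCols S₁ ⊆ M.neighborCols S₂ :=
  biUnion_subset_biUnion_left h

variable [Finite κ] {M : Matrix ι κ K}

theorem ncard_le_ncard_neighborCols (hM : LinearIndependent K M.row) (T : Set ι) :
    T.ncard ≤ (M.neighborCols T).ncard := by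
  set C := M.neighborCols T
  have hzero : ∀ i ∈ T, ∀ j ∉ C, M i j = 0 := fun i hi j hj =>
    by_contra fun h => hj (mem_biUnion hi h)
  have hres : LinearIndependent K fun i : T => fun j : C => M i j := by
    rw [linearIndependent_iff']
    intro s g hg i hi
    refine linearIndependent_iff'.mp (hM.comp _ Subtype.val_injective) s g ?_ i hi
    funext j
    by_cases hj : j ∈ C
    · simpa using congrFun hg ⟨j, hj⟩
    · simp [hzero _ (Subtype.prop _) j hj]
  have := hres.finite
  have := Fintype.ofFinite T
  have := Fintype.ofFinite C
  have h := hres.fintype_card_le_finrank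
  rw [Module.finrank_fintype_fun_eq_card] at h
  rwa [← Nat.card_coe_set_eq, ← Nat.card_coe_set_eq, Nat.card_eq_fintype_card,
    Nat.card_eq_fintype_card]

/-- Tight sets are closed under union: `T ↦ |neighborCols T|` is submodular and, by Hall's
condition, bounded below by `|T|`. -/
theorem ncard_neighborCols_union_le (hM : LinearIndependent K M.row) {S₁ S₂ : Set ι}
    (h₁ : (M.neighborCols S₁).ncard ≤ S₁.ncard) (h₂ : (M.neighborCols S₂).ncard ≤ S₂.ncard) :
    (M.neighborCols (S₁ ∪ S₂)).ncard ≤ (S₁ ∪ S₂).ncard := by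
  have := hM.finite
  have hinter : (S₁ ∩ S₂).ncard ≤ (M.neighborCols S₁ ∩ M.neighborCols S₂).ncard :=
    (ncard_le_ncard_neighborCols hM _).trans <| ncard_le_ncard <| subset_inter
      (M.neighborCols_mono inter_subset_left) (M.neighborCols_mono inter_subset_right)
  have hC := ncard_union_add_ncard_inter (M.neighborCols S₁) (M.neighborCols S₂)
  have hS := ncard_union_add_ncard_inter S₁ S₂
  rw [neighborCols_union]
  omega

theorem ncard_neighborCols_sUnion_le (hM : LinearIndependent K M.row) {𝒯 : Set (Set ι)}
    (h : ∀ S ∈ 𝒯, (M.neighborCols S).ncard ≤ S.ncard) :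
    (M.neighborCols (⋃₀ 𝒯)).ncard ≤ (⋃₀ 𝒯).ncard := by
  have := hM.finite
  induction 𝒯, toFinite 𝒯 using Finite.induction_on with
  | empty => simp [neighborCols]
  | insert _ _ ih =>
    rw [sUnion_insert]
    exact ncard_neighborCols_union_le hM (h _ (mem_insert _ _))
      (ih fun S hS => h S (mem_insert_of_mem _ hS))

/-- `{p}ᶜ` is a union of tight sets, hence tight, so its rows miss some column. -/
theorem exists_col_eq_zero_of_ne [Finite ι] {M : Matrix ι ι K} (hM : LinearIndependent K M.row)
    {𝒮 : Set (Set ι)} (htight : ∀ S ∈ 𝒮, (M.neighborCols S).ncard ≤ S.ncard)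
    (hcover : ∀ p, ⋃ S ∈ {S | S ∈ 𝒮 ∧ p ∉ S}, S = {p}ᶜ) (p : ι) :
    ∃ j, ∀ i ≠ p, M i j = 0 := by
  have hp := ncard_neighborCols_sUnion_le hM (𝒯 := {S | S ∈ 𝒮 ∧ p ∉ S})
    fun S hS => htight S hS.1
  rw [sUnion_eq_biUnion, hcover p] at hp
  obtain ⟨j, hj⟩ : ∃ j, j ∉ M.neighborCols {p}ᶜ := by
    by_contra! h
    have hlt := ncard_lt_ncard (ssubset_univ_iff.mpr (compl_ne_univ.mpr (singleton_nonempty p)))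
    rw [← eq_univ_of_forall h] at hlt
    omega
  exact ⟨j, fun i hi => by_contra fun h => hj (mem_biUnion hi h)⟩

theorem exists_perm_ne_zero_iff [Fintype ι] [DecidableEq ι] {M : Matrix ι ι K} (hM : IsUnit M)
    (h : ∀ p, ∃ j, ∀ i ≠ p, M i j = 0) : ∃ σ : Equiv.Perm ι, ∀ i j, M i j ≠ 0 ↔ σ i = j := by
  choose q hq using h
  have hsupp : ∀ p i, M i (q p) ≠ 0 → i = p := fun p i h => by_contra fun hne => h (hq p i hne)
  have hdiag : ∀ p, M p (q p) ≠ 0 := fun p => by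
    obtain ⟨i, hi⟩ := Function.ne_iff.mp ((linearIndependent_cols_iff_isUnit.mpr hM).ne_zero (q p))
    exact hsupp p i hi ▸ hi
  have hinj : Function.Injective q := fun p₁ p₂ h => hsupp p₂ p₁ (h ▸ hdiag p₁)
  let σ := Equiv.ofBijective q (Finite.injective_iff_bijective.mp hinj)
  refine ⟨σ, fun i j => ⟨fun hij => ?_, fun hij => hij ▸ hdiag i⟩⟩
  obtain ⟨p, rfl⟩ := σ.surjective j
  exact hsupp p i hij ▸ rfl

end Matrix

theorem exists_isPermMatrix_isDiag_mul_eq_one {m : ℕ} {M : Matrix (Fin m) (Fin m) ℝ}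
    {σ : Equiv.Perm (Fin m)} (hσ : ∀ i j, M i j ≠ 0 ↔ σ i = j) :
    ∃ Pmat D : Matrix (Fin m) (Fin m) ℝ,
      IsPermMatrix Pmat ∧ D.IsDiag ∧ IsUnit D.det ∧ D * Pmat * M = 1 := by
  set Pmat : Matrix (Fin m) (Fin m) ℝ := Matrix.of fun i j => if σ.symm i = j then 1 else 0
  set c : Fin m → ℝ := fun i => M (σ.symm i) i
  have hc : ∀ i, c i ≠ 0 := fun i => (hσ _ _).mpr (σ.apply_symm_apply i)
  have hPM : Pmat * M = Matrix.diagonal c := by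
    ext i j
    by_cases hij : i = j
    · subst hij; simp [Pmat, c, Matrix.mul_apply]
    · have : M (σ.symm i) j = 0 := not_not.mp fun h => hij (by simpa using (hσ _ _).mp h)
      simp [Pmat, Matrix.mul_apply, hij, this]
  refine ⟨Pmat, Matrix.diagonal c⁻¹, ⟨σ.symm, rfl⟩, Matrix.isDiag_diagonal _, ?_, ?_⟩
  · simp [Matrix.det_diagonal, Finset.prod_ne_zero_iff, hc]
  · rw [Matrix.mul_assoc, hPM, Matrix.diagonal_mul_diagonal, ← Matrix.diagonal_one]
    congr 1
    funext i
    simp [hc]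

theorem mulVec_indicator_colSupp (W : Matrix (Fin k) (Fin m) ℝ) (v : Fin m → ℝ) :
    W *ᵥ (colSupp W).indicator v = W *ᵥ v := by
  funext i
  simp only [Matrix.mulVec, dotProduct]
  refine Finset.sum_congr rfl fun t _ => ?_
  by_cases ht : t ∈ colSupp W
  · rw [indicator_of_mem ht]
  · have : W i t = 0 := not_not.mp fun h => ht ⟨i, h⟩
    simp [this]

theorem mem_colSupp_mul_iff (W : Matrix (Fin k) (Fin m) ℝ) (M : Matrix (Fin m) (Fin m) ℝ)
    (j : Fin m) : j ∈ colSupp (W * M) ↔ W *ᵥ (fun i => M i j) ≠ 0 :=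
  Function.ne_iff.symm

/-- The closed set `{W | W *ᵥ u = 0}` contains the support of `P`, in particular the tasks of (A5),
whose selected rows form a basis. -/
theorem eq_zero_of_ae_mulVec_eq_zero {P : Measure (Matrix (Fin k) (Fin m) ℝ)}
    (hA5 : ∃ (Ws : Fin m → Matrix (Fin k) (Fin m) ℝ) (idx : Fin m → Fin k),
      (∀ t, Ws t ∈ msupport P) ∧ LinearIndependent ℝ fun t => Ws t (idx t))
    {u : Fin m → ℝ} (hu : ∀ᵐ W ∂P, W *ᵥ u = 0) : u = 0 := by
  obtain ⟨Ws, idx, hWs, hli⟩ := hA5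
  have hsupp := msupport_subset_of_ae_mem
    (isClosed_eq (continuous_id.matrix_mulVec continuous_const) continuous_const) hu
  have hB : IsUnit (Matrix.of fun t => Ws t (idx t)) :=
    Matrix.linearIndependent_rows_iff_isUnit.mp hli
  refine Matrix.mulVec_injective_iff_isUnit.mpr hB ?_
  funext t
  rw [Matrix.mulVec_zero]
  exact congrFun (hsupp (hWs t)) (idx t)

theorem exists_isUnit_mixing_of_ae_eqOn {P : Measure (Matrix (Fin k) (Fin m) ℝ)}
    {Xs : Set (Fin d → ℝ)} {f g : (Fin d → ℝ) → Fin m → ℝ}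
    {V : Matrix (Fin k) (Fin m) ℝ → Matrix (Fin k) (Fin m) ℝ}
    (hA4 : ∃ xs : Fin m → (Fin d → ℝ), (∀ t, xs t ∈ Xs) ∧
      IsUnit (Matrix.of fun i t => f (xs t) i).det)
    (hA5 : ∃ (Ws : Fin m → Matrix (Fin k) (Fin m) ℝ) (idx : Fin m → Fin k),
      (∀ t, Ws t ∈ msupport P) ∧ LinearIndependent ℝ fun t => Ws t (idx t))
    (h : ∀ᵐ W ∂P, EqOn (fun x => W *ᵥ f x) (fun x => V W *ᵥ g x) Xs) :
    ∃ M : Matrix (Fin m) (Fin m) ℝ, IsUnit M ∧ (∀ᵐ W ∂P, V W = W * M) ∧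
      ∀ x ∈ Xs, M *ᵥ g x = f x := by
  obtain ⟨xs, hxs, hF⟩ := hA4
  set F : Matrix (Fin m) (Fin m) ℝ := Matrix.of fun i t => f (xs t) i
  set G : Matrix (Fin m) (Fin m) ℝ := Matrix.of fun i t => g (xs t) i
  have hFG : ∀ᵐ W ∂P, W * F = V W * G := by
    filter_upwards [h] with W hW
    ext i t
    exact congrFun (hW (hxs t)) i
  have hker : ∀ c, G *ᵥ c = 0 → F *ᵥ c = 0 := fun c hc =>
    eq_zero_of_ae_mulVec_eq_zero hA5 <| hFG.mono fun W hW => by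
      rw [Matrix.mulVec_mulVec, hW, ← Matrix.mulVec_mulVec, hc, Matrix.mulVec_zero]
  have hG : IsUnit G.det := isUnit_iff_ne_zero.mpr fun h0 => by
    obtain ⟨c, hc0, hGc⟩ := Matrix.exists_mulVec_eq_zero_iff.mpr h0
    exact hF.ne_zero (Matrix.exists_mulVec_eq_zero_iff.mp ⟨c, hc0, hker c hGc⟩)
  have hV : ∀ᵐ W ∂P, V W = W * (F * G⁻¹) := hFG.mono fun W hW => by
    rw [← Matrix.mul_assoc, hW, Matrix.mul_assoc, Matrix.mul_nonsing_inv _ hG, Matrix.mul_one]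
  refine ⟨F * G⁻¹, ?_, hV, fun x hx => ?_⟩
  · rw [Matrix.isUnit_iff_isUnit_det, Matrix.det_mul]
    exact hF.mul (Matrix.isUnit_nonsing_inv_det G hG)
  · rw [← sub_eq_zero]
    refine eq_zero_of_ae_mulVec_eq_zero hA5 ?_
    filter_upwards [h, hV] with W hW hVW
    rw [Matrix.mulVec_sub, Matrix.mulVec_mulVec, ← hVW, sub_eq_zero]
    exact (hW hx).symm

/-- By (A6), a generic task `W` with column support `S` has `neighborCols S ⊆ colSupp (W * M)`. -/
theorem ncard_neighborCols_le_of_measure_pos {P : Measure (Matrix (Fin k) (Fin m) ℝ)}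
    {M : Matrix (Fin m) (Fin m) ℝ} {S : Set (Fin m)} (hS : 0 < P {W | colSupp W = S})
    (hA6 : ∀ a : Fin m → ℝ, a ≠ 0 → {j | a j ≠ 0} ⊆ S →
      P ({W | W *ᵥ a = 0} ∩ {W | colSupp W = S}) = 0)
    (hsparse : ∀ᵐ W ∂P, colSparsity (W * M) ≤ colSparsity W) :
    (M.neighborCols S).ncard ≤ S.ncard := by
  set N := M.neighborCols S
  let a : Fin m → Fin m → ℝ := fun j => S.indicator fun i => M i j
  have hgeneric : ∀ᵐ W ∂P, ∀ j ∈ N, colSupp W = S → W *ᵥ a j ≠ 0 := by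
    refine (Filter.eventually_all_finite (toFinite N)).mpr fun j hj => ae_iff.mpr ?_
    obtain ⟨i, hiS, hij⟩ : ∃ i ∈ S, M i j ≠ 0 := by simpa [N, Matrix.neighborCols] using hj
    have ha : a j ≠ 0 := Function.ne_iff.mpr ⟨i, by simpa [a, hiS] using hij⟩
    refine measure_mono_null (fun W hW => ?_) (hA6 (a j) ha fun t ht =>
      by_contra fun htS => ht (indicator_of_notMem htS _))
    obtain ⟨hWS, hW0⟩ := Classical.not_imp.mp hW
    exact ⟨not_not.mp hW0, hWS⟩
  obtain ⟨W, hWS, hW, hWM⟩ := Measure.exists_mem_of_measure_ne_zero_of_ae hS.ne'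
    (ae_restrict_of_ae (hgeneric.and hsparse))
  have hNW : N ⊆ colSupp (W * M) := fun j hj => by
    rw [mem_colSupp_mul_iff, ← mulVec_indicator_colSupp, hWS]
    exact hW j hj hWS
  calc N.ncard ≤ colSparsity (W * M) := ncard_le_ncard hNW
    _ ≤ colSparsity W := hWM
    _ = S.ncard := congrArg ncard hWS

section Objective

variable {klDiv : Measure Y → Measure Y → ℝ≥0∞} {ν : (Fin k → ℝ) → Measure Y}
  {μ : Matrix (Fin k) (Fin m) ℝ → Measure (Fin d → ℝ)} {f g : (Fin d → ℝ) → Fin m → ℝ}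
  {P : Measure (Matrix (Fin k) (Fin m) ℝ)}

theorem feasibleSparse_self (hf : Continuous f) (hkl_self : ∀ ρ, klDiv ρ ρ = 0) :
    FeasibleSparse klDiv ν μ f P f id :=
  ⟨hf, fun W _ => ⟨le_rfl, fun Wt _ => by simp [innerRisk, hkl_self]⟩⟩

theorem outerObj_self_eq_zero (hkl_self : ∀ ρ, klDiv ρ ρ = 0) :
    outerObj klDiv ν μ f P f id = 0 := by
  simp [outerObj, innerRisk, hkl_self]

theorem eqOn_of_innerRisk_eq_zero (hkl_id : ∀ η η', klDiv (ν η) (ν η') = 0 → η = η')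
    (hf : Continuous f) (hg : Continuous g) {Wt W : Matrix (Fin k) (Fin m) ℝ}
    (hmeas : Measurable fun x => klDiv (ν (W *ᵥ f x)) (ν (Wt *ᵥ g x)))
    (h : innerRisk klDiv ν μ f g Wt W = 0) :
    EqOn (fun x => W *ᵥ f x) (fun x => Wt *ᵥ g x) (msupport (μ W)) :=
  eqOn_msupport_of_ae_eq (continuous_const.matrix_mulVec hf) (continuous_const.matrix_mulVec hg)
    (((lintegral_eq_zero_iff hmeas).mp h).mono fun _ hx => hkl_id _ _ hx)

theorem ae_eqOn_of_outerObj_eq_zero (hkl_id : ∀ η η', klDiv (ν η) (ν η') = 0 → η = η')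
    (hf : Continuous f) (hg : Continuous g) {Xs : Set (Fin d → ℝ)}
    {V : Matrix (Fin k) (Fin m) ℝ → Matrix (Fin k) (Fin m) ℝ}
    (hμ : ∀ W ∈ msupport P, msupport (μ W) = Xs)
    (hmeas_inner : ∀ W, Measurable fun x => klDiv (ν (W *ᵥ f x)) (ν (V W *ᵥ g x)))
    (hmeas_outer : Measurable fun W => innerRisk klDiv ν μ f g (V W) W)
    (h : outerObj klDiv ν μ f P g V = 0) :
    ∀ᵐ W ∂P, EqOn (fun x => W *ᵥ f x) (fun x => V W *ᵥ g x) Xs := by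
  filter_upwards [(lintegral_eq_zero_iff hmeas_outer).mp h, ae_mem_msupport P] with W hW hWP
  exact hμ W hWP ▸ eqOn_of_innerRisk_eq_zero hkl_id hf hg (hmeas_inner W) hW

end Objective
theorem sparse_multitask_learning_disentangles_general
    (Xs : Set (Fin d → ℝ))
    (f : (Fin d → ℝ) → Fin m → ℝ) (hf : Continuous f)
    (P : Measure (Matrix (Fin k) (Fin m) ℝ))
    (μ : Matrix (Fin k) (Fin m) ℝ → Measure (Fin d → ℝ))
    (hμsupp : ∀ W ∈ msupport P, msupport (μ W) = Xs)
    (ν : (Fin k → ℝ) → Measure Y)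
    (klDiv : Measure Y → Measure Y → ℝ≥0∞)
    (hkl_self : ∀ ρ : Measure Y, klDiv ρ ρ = 0)
    (hkl_id : ∀ η η' : Fin k → ℝ, klDiv (ν η) (ν η') = 0 → η = η')
    (hmeas_inner : ∀ g : (Fin d → ℝ) → Fin m → ℝ, Continuous g →
      ∀ Wt W : Matrix (Fin k) (Fin m) ℝ,
        Measurable fun x => klDiv (ν (W.mulVec (f x))) (ν (Wt.mulVec (g x))))
    (hA4 : ∃ xs : Fin m → (Fin d → ℝ), (∀ t, xs t ∈ Xs) ∧
      IsUnit (Matrix.of fun i t => f (xs t) i).det)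
    (hA5 : ∃ (Ws : Fin m → Matrix (Fin k) (Fin m) ℝ) (idx : Fin m → Fin k),
      (∀ t, Ws t ∈ msupport P) ∧
      LinearIndependent ℝ fun t => Ws t (idx t))
    (hA6 : ∀ S : Set (Fin m), 0 < P {W | colSupp W = S} →
      ∀ a : Fin m → ℝ, a ≠ 0 → {j | a j ≠ 0} ⊆ S →
        P ({W | W.mulVec a = 0} ∩ {W | colSupp W = S}) = 0)
    (hA7 : ∀ j : Fin m,
      (⋃ S ∈ {S : Set (Fin m) | 0 < P {W | colSupp W = S} ∧ j ∉ S}, S) =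
        ({j}ᶜ : Set (Fin m)))
    (fhat : (Fin d → ℝ) → Fin m → ℝ) (hfhat : Continuous fhat)
    (What : Matrix (Fin k) (Fin m) ℝ → Matrix (Fin k) (Fin m) ℝ)
    (hfeas : FeasibleSparse klDiv ν μ f P fhat What)
    (hmeas_outer : Measurable fun W => innerRisk klDiv ν μ f fhat (What W) W)
    (hopt : ∀ (g : (Fin d → ℝ) → Fin m → ℝ)
        (V : Matrix (Fin k) (Fin m) ℝ → Matrix (Fin k) (Fin m) ℝ),
      FeasibleSparse klDiv ν μ f P g V →
        outerObj klDiv ν μ f P fhat What ≤ outerObj klDiv ν μ f P g V) :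
    ∃ (Pmat D : Matrix (Fin m) (Fin m) ℝ),
      IsPermMatrix Pmat ∧ D.IsDiag ∧ IsUnit D.det ∧
      ∀ x ∈ Xs, fhat x = (D * Pmat).mulVec (f x) := by
  have hJ : outerObj klDiv ν μ f P fhat What = 0 := le_antisymm
    ((hopt f id (feasibleSparse_self hf hkl_self)).trans_eq (outerObj_self_eq_zero hkl_self))
    zero_le
  have hrep := ae_eqOn_of_outerObj_eq_zero hkl_id hf hfhat hμsupp
    (fun W => hmeas_inner fhat hfhat (What W) W) hmeas_outer hJ
  obtain ⟨M, hM, hWM, hMf⟩ := exists_isUnit_mixing_of_ae_eqOn hA4 hA5 hrep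
  have hsparse : ∀ᵐ W ∂P, colSparsity (W * M) ≤ colSparsity W := by
    filter_upwards [ae_mem_msupport P, hWM] with W hW hVW
    exact hVW ▸ (hfeas.2 W hW).1
  obtain ⟨σ, hσ⟩ := M.exists_perm_ne_zero_iff hM <|
    M.exists_col_eq_zero_of_ne (Matrix.linearIndependent_rows_iff_isUnit.mpr hM)
      (fun S hS => ncard_neighborCols_le_of_measure_pos hS (hA6 S hS) hsparse) hA7
  obtain ⟨Pmat, D, hPmat, hD, hDdet, hDPM⟩ := exists_isPermMatrix_isDiag_mul_eq_one hσ
  refine ⟨Pmat, D, hPmat, hD, hDdet, fun x hx => ?_⟩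
  rw [← hMf x hx, Matrix.mulVec_mulVec, hDPM, Matrix.one_mulVec]

/-- **Sparse multi-task learning yields disentanglement (per-task sparsity constraint,
Theorem 1).**  Let `Xs ⊆ ℝ^d` be nonempty, `f : ℝ^d → ℝ^m` continuous, `k, m ≥ 1`, `P` a
Borel probability measure on `ℝ^{k×m}` with support `𝒲 = msupport P`, and for each
`W ∈ 𝒲` let `μ W` be a Borel probability measure on `ℝ^d` with topological support `Xs`.
Let `η ↦ ν η` be a KL-identifiable family of probability measures (`klDiv` is the
Kullback–Leibler divergence, `ℝ≥0∞`-valued, with `klDiv ρ ρ = 0`), with all KL integrands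
measurable.  Under assumptions (A4)–(A7), if `(f̂, Ŵ)` is feasible with `f̂` continuous
and its outer value is minimal among all feasible pairs, then `f̂` is disentangled
w.r.t. `f`: there are a permutation matrix `Π` and an invertible diagonal matrix `D`
such that `f̂ x = (D Π) (f x)` for all `x ∈ Xs`. -/
theorem sparse_multitask_learning_disentangles
    (hk : 1 ≤ k) (hm : 1 ≤ m)
    (Xs : Set (Fin d → ℝ)) (hXs : Xs.Nonempty)
    (f : (Fin d → ℝ) → Fin m → ℝ) (hf : Continuous f)
    (P : Measure (Matrix (Fin k) (Fin m) ℝ)) [IsProbabilityMeasure P]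
    (μ : Matrix (Fin k) (Fin m) ℝ → Measure (Fin d → ℝ))
    (hμprob : ∀ W ∈ msupport P, IsProbabilityMeasure (μ W))
    (hμsupp : ∀ W ∈ msupport P, msupport (μ W) = Xs)
    (ν : (Fin k → ℝ) → Measure Y) [∀ η, IsProbabilityMeasure (ν η)]
    (klDiv : Measure Y → Measure Y → ℝ≥0∞)
    (hkl_self : ∀ ρ : Measure Y, klDiv ρ ρ = 0)
    (hkl_id : ∀ η η' : Fin k → ℝ, klDiv (ν η) (ν η') = 0 → η = η')
    (hmeas_inner : ∀ g : (Fin d → ℝ) → Fin m → ℝ, Continuous g →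
      ∀ Wt W : Matrix (Fin k) (Fin m) ℝ,
        Measurable fun x => klDiv (ν (W.mulVec (f x))) (ν (Wt.mulVec (g x))))
    (hA4 : ∃ xs : Fin m → (Fin d → ℝ), (∀ t, xs t ∈ Xs) ∧
      IsUnit (Matrix.of fun i t => f (xs t) i).det)
    (hA5 : ∃ (Ws : Fin m → Matrix (Fin k) (Fin m) ℝ) (idx : Fin m → Fin k),
      (∀ t, Ws t ∈ msupport P) ∧
      LinearIndependent ℝ fun t => Ws t (idx t))
    (hA6 : ∀ S : Set (Fin m), 0 < P {W | colSupp W = S} →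
      ∀ a : Fin m → ℝ, a ≠ 0 → {j | a j ≠ 0} ⊆ S →
        P ({W | W.mulVec a = 0} ∩ {W | colSupp W = S}) = 0)
    (hA7 : ∀ j : Fin m,
      (⋃ S ∈ {S : Set (Fin m) | 0 < P {W | colSupp W = S} ∧ j ∉ S}, S) =
        ({j}ᶜ : Set (Fin m)))
    (fhat : (Fin d → ℝ) → Fin m → ℝ) (hfhat : Continuous fhat)
    (What : Matrix (Fin k) (Fin m) ℝ → Matrix (Fin k) (Fin m) ℝ)
    (hfeas : FeasibleSparse klDiv ν μ f P fhat What)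
    (hmeas_outer : Measurable fun W => innerRisk klDiv ν μ f fhat (What W) W)
    (hopt : ∀ (g : (Fin d → ℝ) → Fin m → ℝ)
        (V : Matrix (Fin k) (Fin m) ℝ → Matrix (Fin k) (Fin m) ℝ),
      FeasibleSparse klDiv ν μ f P g V →
        outerObj klDiv ν μ f P fhat What ≤ outerObj klDiv ν μ f P g V) :
    ∃ (Pmat D : Matrix (Fin m) (Fin m) ℝ),
      IsPermMatrix Pmat ∧ D.IsDiag ∧ IsUnit D.det ∧
      ∀ x ∈ Xs, fhat x = (D * Pmat).mulVec (f x) :=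
  sparse_multitask_learning_disentangles_general Xs f hf P μ hμsupp ν klDiv hkl_self hkl_id
    hmeas_inner hA4 hA5 hA6 hA7 fhat hfhat What hfeas hmeas_outer hopt

end
end

section
/- Fix κ > 0 and an integer p ≥ 1, and let h : ℝ^p → ℝ be h(u) = ‖u‖ + (κ/2)‖u‖². Then the Fenchel conjugate of h satisfies h*(v) := sup_{u ∈ ℝ^p} (⟨v, u⟩ − h(u)) = (1/(2κ))‖BST(v, 1)‖² for every v ∈ ℝ^p. -/
open scoped RealInnerProductSpace

/-- The block soft-thresholding operator `BST(a, τ) = (1 − τ/‖a‖)₊ a`, with `BST(0, τ) = 0`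
(automatic here since the scalar multiplies `a = 0`), so that `‖BST(a, τ)‖ = (‖a‖ − τ)₊`. -/
noncomputable def BST {p : ℕ} (a : EuclideanSpace ℝ (Fin p)) (τ : ℝ) :
    EuclideanSpace ℝ (Fin p) :=
  max (1 - τ / ‖a‖) 0 • a

/-- **Fenchel conjugate of `h(u) = ‖u‖ + (κ/2)‖u‖²`**: for every `v ∈ ℝ^p`,
`h*(v) = sup_u (⟪v, u⟫ − h(u)) = (1/(2κ))‖BST(v, 1)‖²`. -/
theorem fenchel_conjugate_norm_plus_sq_eq_BST {p : ℕ} (hp : 1 ≤ p)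
    (κ : ℝ) (hκ : 0 < κ) (v : EuclideanSpace ℝ (Fin p)) :
    (⨆ u : EuclideanSpace ℝ (Fin p), (⟪v, u⟫ - (‖u‖ + κ / 2 * ‖u‖ ^ 2))) =
      1 / (2 * κ) * ‖BST v 1‖ ^ 2 := by
  have hv : (0:ℝ) ≤ ‖v‖ := norm_nonneg v
  set a : ℝ := max (‖v‖ - 1) 0 with ha
  have ha0 : 0 ≤ a := le_max_right _ _
  have ha1 : ‖v‖ - 1 ≤ a := le_max_left _ _
  have hBST : ‖BST v 1‖ = a := by
    unfold BST
    rw [norm_smul, Real.norm_eq_abs, abs_of_nonneg (le_max_right _ _), ha]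
    rcases eq_or_ne v 0 with h | h
    · simp [h]
    · have hv' : 0 < ‖v‖ := norm_pos_iff.mpr h
      rcases le_or_gt ‖v‖ 1 with h1 | h1
      · have hle : 1 - 1 / ‖v‖ ≤ 0 := by
          have : 1 ≤ 1 / ‖v‖ := (le_div_iff₀ hv').mpr (by linarith)
          linarith
        rw [max_eq_right hle, max_eq_right (by linarith : ‖v‖ - 1 ≤ 0)]
        ring
      · have h2 : (0:ℝ) ≤ 1 - 1 / ‖v‖ := by
          have : 1 / ‖v‖ ≤ 1 := by
            rw [div_le_one hv']; linarith
          linarith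
        rw [max_eq_left h2, max_eq_left (by linarith : (0:ℝ) ≤ ‖v‖ - 1)]
        field_simp
  have key : ∀ u : EuclideanSpace ℝ (Fin p),
      ⟪v, u⟫ - (‖u‖ + κ / 2 * ‖u‖ ^ 2) ≤ 1 / (2 * κ) * a ^ 2 := by
    intro u
    have h1 := real_inner_le_norm v u
    have ht : (0:ℝ) ≤ ‖u‖ := norm_nonneg u
    have h2 : 0 ≤ (a - (‖v‖ - 1)) * ‖u‖ :=
      mul_nonneg (by linarith) ht
    have h3' : a * ‖u‖ ≤ κ / 2 * ‖u‖ ^ 2 + 1 / (2 * κ) * a ^ 2 := by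
      rw [← sub_nonneg]
      have hκ' : κ ≠ 0 := ne_of_gt hκ
      have heq : κ / 2 * ‖u‖ ^ 2 + 1 / (2 * κ) * a ^ 2 - a * ‖u‖ =
          (κ * ‖u‖ - a) ^ 2 / (2 * κ) := by
        field_simp
        ring
      rw [heq]
      positivity
    nlinarith
  have hbdd : BddAbove (Set.range fun u : EuclideanSpace ℝ (Fin p) =>
      ⟪v, u⟫ - (‖u‖ + κ / 2 * ‖u‖ ^ 2)) := by
    refine ⟨1 / (2 * κ) * a ^ 2, ?_⟩
    rintro _ ⟨u, rfl⟩
    exact key u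
  rw [hBST]
  apply le_antisymm
  · exact ciSup_le key
  · rcases eq_or_lt_of_le ha0 with h0 | h0
    · have heq : 1 / (2 * κ) * a ^ 2 = ⟪v, (0 : EuclideanSpace ℝ (Fin p))⟫ -
          (‖(0 : EuclideanSpace ℝ (Fin p))‖ + κ / 2 * ‖(0 : EuclideanSpace ℝ (Fin p))‖ ^ 2) := by
        simp [← h0]
      exact heq.le.trans (le_ciSup hbdd 0)
    · have hgt : 1 < ‖v‖ := by
        by_contra h
        push_neg at h
        have : a = 0 := max_eq_right (by linarith)
        linarith
      have hv' : 0 < ‖v‖ := by linarith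
      have haeq : a = ‖v‖ - 1 := max_eq_left (by linarith)
      have hκ' : κ ≠ 0 := ne_of_gt hκ
      have hvne : ‖v‖ ≠ 0 := ne_of_gt hv'
      set c : ℝ := a / (κ * ‖v‖) with hc
      have hc0 : 0 ≤ c := div_nonneg ha0 (by positivity)
      refine le_trans ?_ (le_ciSup hbdd (c • v))
      have hin : ⟪v, c • v⟫ = c * ‖v‖ ^ 2 := by
        rw [real_inner_smul_right, real_inner_self_eq_norm_sq]
      have hnrm : ‖c • v‖ = a / κ := by
        rw [norm_smul, Real.norm_eq_abs, abs_of_nonneg hc0, hc]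
        field_simp
      have hcv : c * ‖v‖ ^ 2 = (‖v‖ - 1) * ‖v‖ / κ := by
        rw [hc, haeq]
        field_simp
      rw [hin, hnrm, hcv, haeq]
      have : (‖v‖ - 1) * ‖v‖ / κ - ((‖v‖ - 1) / κ + κ / 2 * ((‖v‖ - 1) / κ) ^ 2) =
          1 / (2 * κ) * (‖v‖ - 1) ^ 2 := by
        field_simp
        ring
      linarith
end

section
/- Fix λ₁ ≥ 0, λ₂ > 0 and an integer p ≥ 1, and let g : ℝ^p → ℝ be g(u) = λ₁‖u‖ + (λ₂/2)‖u‖². Then the Fenchel conjugate of g satisfies g*(v) := sup_{u ∈ ℝ^p} (⟨v, u⟩ − g(u)) = (1/(2λ₂))‖BST(v, λ₁)‖² for every v ∈ ℝ^p. -/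
/-!
Reduce to a one-dimensional problem along the ray of `v`. By Cauchy–Schwarz,
`⟪v, u⟫ - g(u) ≤ (‖v‖ - λ₁) t - (λ₂/2) t²` with `t = ‖u‖`, and completing the square bounds
this by `((‖v‖ - λ₁)₊)² / (2λ₂)`. The bound is attained at `u = λ₂⁻¹ • BST(v, λ₁)`, which is a
nonnegative multiple of `v` of norm `(‖v‖ - λ₁)₊ / λ₂`.
-/

open scoped RealInnerProductSpace

lemma mul_sub_half_mul_sq_le_max_sq {a l t : ℝ} (hl : 0 < l) (ht : 0 ≤ t) :
    a * t - l / 2 * t ^ 2 ≤ 1 / (2 * l) * max a 0 ^ 2 := by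
  have hat : a * t ≤ max a 0 * t := mul_le_mul_of_nonneg_right (le_max_left a 0) ht
  rw [show 1 / (2 * l) * max a 0 ^ 2 = max a 0 ^ 2 / (2 * l) by ring, le_div_iff₀ (by positivity)]
  nlinarith [sq_nonneg (l * t - max a 0)]

lemma max_zero_mul_self (x : ℝ) : max x 0 * x = max x 0 ^ 2 := by
  rcases le_total x 0 with hx | hx
  · simp [max_eq_right hx]
  · rw [max_eq_left hx, sq]

namespace BST

variable {p : ℕ} (a : EuclideanSpace ℝ (Fin p)) {τ : ℝ}

lemma norm_eq (hτ : 0 ≤ τ) : ‖BST a τ‖ = max (‖a‖ - τ) 0 := by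
  rw [BST, norm_smul, Real.norm_eq_abs, abs_of_nonneg (le_max_right _ _)]
  rcases eq_or_ne a 0 with rfl | ha
  · simp [hτ]
  · rw [max_mul_of_nonneg _ _ (norm_nonneg a), zero_mul, sub_mul, one_mul,
      div_mul_cancel₀ _ (norm_ne_zero_iff.mpr ha)]

lemma inner_eq_norm_mul_norm (τ : ℝ) : ⟪a, BST a τ⟫ = ‖a‖ * ‖BST a τ‖ := by
  rw [BST, real_inner_smul_right, real_inner_self_eq_norm_sq, norm_smul, Real.norm_eq_abs,
    abs_of_nonneg (le_max_right _ _)]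
  ring

end BST

section GroupLasso

variable {E : Type*} [NormedAddCommGroup E] [InnerProductSpace ℝ E] {lam2 : ℝ}

noncomputable def groupLassoPenalty (lam1 lam2 : ℝ) (u : E) : ℝ :=
  lam1 * ‖u‖ + lam2 / 2 * ‖u‖ ^ 2

lemma inner_sub_groupLassoPenalty_le (lam1 : ℝ) (hlam2 : 0 < lam2) (v u : E) :
    ⟪v, u⟫ - groupLassoPenalty lam1 lam2 u ≤ 1 / (2 * lam2) * max (‖v‖ - lam1) 0 ^ 2 := by
  have hcs : ⟪v, u⟫ ≤ ‖v‖ * ‖u‖ := real_inner_le_norm v u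
  have hray := mul_sub_half_mul_sq_le_max_sq (a := ‖v‖ - lam1) hlam2 (norm_nonneg u)
  unfold groupLassoPenalty
  linarith

lemma inner_sub_groupLassoPenalty_inv_smul_eq {lam1 : ℝ} (hlam2 : 0 < lam2) {v w : E}
    (hvw : ⟪v, w⟫ = ‖v‖ * ‖w‖) (hw : ‖w‖ = max (‖v‖ - lam1) 0) :
    ⟪v, lam2⁻¹ • w⟫ - groupLassoPenalty lam1 lam2 (lam2⁻¹ • w) = 1 / (2 * lam2) * ‖w‖ ^ 2 := by
  have hsq : ‖w‖ * (‖v‖ - lam1) = ‖w‖ ^ 2 := by rw [hw, max_zero_mul_self]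
  rw [groupLassoPenalty, real_inner_smul_right, hvw, norm_smul, Real.norm_eq_abs,
    abs_of_pos (inv_pos.mpr hlam2)]
  field_simp
  linear_combination 2 * hsq

end GroupLasso

theorem fenchel_conjugate_groupLasso_eq_BST_general {p : ℕ}
    (lam1 lam2 : ℝ) (hlam1 : 0 ≤ lam1) (hlam2 : 0 < lam2)
    (v : EuclideanSpace ℝ (Fin p)) :
    (⨆ u : EuclideanSpace ℝ (Fin p), (⟪v, u⟫ - (lam1 * ‖u‖ + lam2 / 2 * ‖u‖ ^ 2))) =
      1 / (2 * lam2) * ‖BST v lam1‖ ^ 2 := by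
  have hbound (u : EuclideanSpace ℝ (Fin p)) :
      ⟪v, u⟫ - groupLassoPenalty lam1 lam2 u ≤ 1 / (2 * lam2) * ‖BST v lam1‖ ^ 2 := by
    rw [BST.norm_eq v hlam1]
    exact inner_sub_groupLassoPenalty_le lam1 hlam2 v u
  have hattained := inner_sub_groupLassoPenalty_inv_smul_eq hlam2
    (BST.inner_eq_norm_mul_norm v lam1) (BST.norm_eq v hlam1)
  exact IsGreatest.csSup_eq ⟨⟨_, hattained⟩, Set.forall_mem_range.mpr hbound⟩

/-- **Fenchel conjugate of `g(u) = λ₁‖u‖ + (λ₂/2)‖u‖²`**: for every `v ∈ ℝ^p`,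
`g*(v) = sup_u (⟪v, u⟫ − g(u)) = (1/(2λ₂))‖BST(v, λ₁)‖²`. -/
theorem fenchel_conjugate_groupLasso_eq_BST {p : ℕ} (hp : 1 ≤ p)
    (lam1 lam2 : ℝ) (hlam1 : 0 ≤ lam1) (hlam2 : 0 < lam2)
    (v : EuclideanSpace ℝ (Fin p)) :
    (⨆ u : EuclideanSpace ℝ (Fin p), (⟪v, u⟫ - (lam1 * ‖u‖ + lam2 / 2 * ‖u‖ ^ 2))) =
      1 / (2 * lam2) * ‖BST v lam1‖ ^ 2 :=
  fenchel_conjugate_groupLasso_eq_BST_general lam1 lam2 hlam1 hlam2 v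
end
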